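/- Let c^k_{ij} be structure constants of a real Lie algebra and Ω(f,g)(x) := Σ x_k c^k_{ij} ∂_i f ∂_j g the Lie–Poisson bivector on ℝ^n; let A(f)(x) := Σ_i x_i ∂_i f be the Euler vector field, and let E(f) := Σ_i ξ^i ∂_i f be a vector field with smooth coefficients ξ^i ∈ C^∞(ℝ^n). Define Λ(f,g) := Ω(f,g) + E(f)·A(g) − A(f)·E(g). If E(Λ(f,g)) − Λ(E(f),g) − Λ(f,E(g)) = 0 for all smooth f,g (i.e. [E,Λ] = 0), then the bracket {f,g} := Λ(f,g) + f·E(g) − g·E(f) satisfies the Jacobi identity {f,{g,h}} + {g,{h,f}} + {h,{f,g}} = 0 for all smooth f,g,h; that is, the pair (Ω + E∧A, E) defines a Jacobi structure on ℝ^n. -/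

import Mathlib

open scoped ContDiff

/-- The `i`-th partial derivative of `f : ℝ^n → ℝ`. -/
noncomputable def pd {n : ℕ} (i : Fin n) (f : (Fin n → ℝ) → ℝ) : (Fin n → ℝ) → ℝ :=
  fun x => fderiv ℝ f x (Pi.single i 1)

/-- The Lie–Poisson bivector associated to structure constants `c`. -/
noncomputable def liePoisson {n : ℕ} (c : Fin n → Fin n → Fin n → ℝ)
    (f g : (Fin n → ℝ) → ℝ) : (Fin n → ℝ) → ℝ :=
  fun x => ∑ k : Fin n, ∑ i : Fin n, ∑ j : Fin n, x k * c k i j * pd i f x * pd j g x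

/-- The Euler (dilatation) vector field `A(f)(x) = ∑ x_i ∂_i f(x)`. -/
noncomputable def eulerField {n : ℕ} (f : (Fin n → ℝ) → ℝ) : (Fin n → ℝ) → ℝ :=
  fun x => ∑ i : Fin n, x i * pd i f x

/-- The vector field `E(f)(x) = ∑ ξ^i(x) ∂_i f(x)` with coefficient functions `ξ`. -/
noncomputable def vecField {n : ℕ} (ξ : Fin n → (Fin n → ℝ) → ℝ)
    (f : (Fin n → ℝ) → ℝ) : (Fin n → ℝ) → ℝ :=
  fun x => ∑ i : Fin n, ξ i x * pd i f x

/-- The bivector `Λ := Ω + E ∧ A` of the linear Jacobi construction. -/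
noncomputable def jacLambda {n : ℕ} (c : Fin n → Fin n → Fin n → ℝ)
    (ξ : Fin n → (Fin n → ℝ) → ℝ) (f g : (Fin n → ℝ) → ℝ) : (Fin n → ℝ) → ℝ :=
  fun x => liePoisson c f g x + vecField ξ f x * eulerField g x -
    eulerField f x * vecField ξ g x

/-- The Jacobi bracket `{f,g} := Λ(f,g) + f·E(g) - g·E(f)`. -/
noncomputable def jacBr {n : ℕ} (c : Fin n → Fin n → Fin n → ℝ)
    (ξ : Fin n → (Fin n → ℝ) → ℝ) (f g : (Fin n → ℝ) → ℝ) : (Fin n → ℝ) → ℝ :=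
  fun x => jacLambda c ξ f g x + f x * vecField ξ g x - g x * vecField ξ f x

/-!
Write `Λ(f, g) = ∑ W^{ij} ∂_i f ∂_j g` with `W^{ij} = ∑_k x_k c^k_{ij} + ξ^i x_j - x_i ξ^j`.
For any smooth antisymmetric `W` and vector field `E = ∑ ξ^i ∂_i`, the Leibniz rule expands the
Jacobiator of `{f, g} = Λ(f, g) + f E(g) - g E(f)` into `f [E, Λ](g, h) + cyclic` plus the cyclic
sum of `Λ(f, Λ(g, h)) + E(f) Λ(g, h)`. In the latter the second derivatives cancel by symmetry of
the Hessians, leaving a trilinear form in `df, dg, dh` whose coefficients are the cyclic sums over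
`(a, i, j)` of `∑_b W^{ab} ∂_b W^{ij} + ξ^a W^{ij}`: their vanishing is the coordinate form of
`[Λ, Λ] = 2 E ∧ Λ`. For the linear `W` above, the Lie–Poisson part of these sums cancels by the
Jacobi identity of the structure constants, and the terms with derivatives of `ξ` cancel once
`[E, Λ] = 0` is evaluated on the coordinate functions `x_i, x_j`, which expresses `∑_b ξ^b c^b_{ij}`
through the derivatives of `ξ`.
-/

open Finset

section

variable {n : ℕ}

section PartialDerivatives

variable {f g : (Fin n → ℝ) → ℝ} {x : Fin n → ℝ}

lemma pd_fun_add (hf : DifferentiableAt ℝ f x) (hg : DifferentiableAt ℝ g x) (i : Fin n) :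
    pd i (fun y => f y + g y) x = pd i f x + pd i g x := by
  simp [pd, fderiv_fun_add hf hg]

lemma pd_fun_sub (hf : DifferentiableAt ℝ f x) (hg : DifferentiableAt ℝ g x) (i : Fin n) :
    pd i (fun y => f y - g y) x = pd i f x - pd i g x := by
  simp [pd, fderiv_fun_sub hf hg]

lemma pd_fun_mul (hf : DifferentiableAt ℝ f x) (hg : DifferentiableAt ℝ g x) (i : Fin n) :
    pd i (fun y => f y * g y) x = pd i f x * g x + f x * pd i g x := by
  simp only [pd, fderiv_fun_mul hf hg, add_apply, smul_apply, smul_eq_mul]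
  ring

lemma pd_fun_sum {ι : Type*} (s : Finset ι) {F : ι → (Fin n → ℝ) → ℝ}
    (hF : ∀ j ∈ s, DifferentiableAt ℝ (F j) x) (i : Fin n) :
    pd i (fun y => ∑ j ∈ s, F j y) x = ∑ j ∈ s, pd i (F j) x := by
  simp [pd, fderiv_fun_sum hF]

lemma pd_const (i : Fin n) (a : ℝ) (x : Fin n → ℝ) : pd i (fun _ => a) x = 0 := by
  simp [pd]

lemma pd_apply (i k : Fin n) (x : Fin n → ℝ) :
    pd i (fun y => y k) x = if k = i then 1 else 0 := by
  have h : fderiv ℝ (fun y : Fin n → ℝ => y k) x = ContinuousLinearMap.proj k :=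
    (ContinuousLinearMap.proj k : (Fin n → ℝ) →L[ℝ] ℝ).fderiv
  simp [pd, h, Pi.single_apply]

lemma ContDiff.pd (hf : ContDiff ℝ ∞ f) (i : Fin n) : ContDiff ℝ ∞ (pd i f) :=
  (ContinuousLinearMap.apply ℝ ℝ (Pi.single i (1 : ℝ))).contDiff.comp
    (hf.fderiv_right (by simp))

lemma pd_pd_eq_fderiv_fderiv (hf : ContDiff ℝ ∞ f) (a b : Fin n) (x : Fin n → ℝ) :
    pd a (pd b f) x = fderiv ℝ (fderiv ℝ f) x (Pi.single a 1) (Pi.single b 1) := by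
  have hd : DifferentiableAt ℝ (fderiv ℝ f) x :=
    (hf.fderiv_right (m := ∞) (by simp)).differentiable (by simp) x
  change fderiv ℝ (fun y => fderiv ℝ f y (Pi.single b 1)) x (Pi.single a 1) = _
  simp [fderiv_clm_apply hd (differentiableAt_const _)]

lemma pd_comm (hf : ContDiff ℝ ∞ f) (a b : Fin n) (x : Fin n → ℝ) :
    pd a (pd b f) x = pd b (pd a f) x := by
  rw [pd_pd_eq_fderiv_fderiv hf, pd_pd_eq_fderiv_fderiv hf]
  exact hf.contDiffAt.isSymmSndFDerivAt (by simp; exact WithTop.coe_le_coe.mpr le_top) _ _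

end PartialDerivatives

section VectorFields

variable (η : Fin n → (Fin n → ℝ) → ℝ) {f g : (Fin n → ℝ) → ℝ} {x : Fin n → ℝ}

lemma vecField_fun_add (hf : DifferentiableAt ℝ f x) (hg : DifferentiableAt ℝ g x) :
    vecField η (fun y => f y + g y) x = vecField η f x + vecField η g x := by
  simp only [vecField, pd_fun_add hf hg, mul_add, sum_add_distrib]

lemma vecField_fun_sub (hf : DifferentiableAt ℝ f x) (hg : DifferentiableAt ℝ g x) :
    vecField η (fun y => f y - g y) x = vecField η f x - vecField η g x := by
  simp only [vecField, pd_fun_sub hf hg, mul_sub, sum_sub_distrib]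

lemma vecField_fun_mul (hf : DifferentiableAt ℝ f x) (hg : DifferentiableAt ℝ g x) :
    vecField η (fun y => f y * g y) x = vecField η f x * g x + f x * vecField η g x := by
  simp only [vecField, pd_fun_mul hf hg, mul_add, sum_add_distrib, sum_mul, mul_sum]
  congr 1 <;> exact sum_congr rfl fun i _ => by ring

lemma vecField_apply (i : Fin n) : vecField η (fun y => y i) = η i := by
  funext x
  simp [vecField, pd_apply]

lemma contDiff_vecField {η : Fin n → (Fin n → ℝ) → ℝ} (hη : ∀ i, ContDiff ℝ ∞ (η i))
    (hf : ContDiff ℝ ∞ f) : ContDiff ℝ ∞ (vecField η f) :=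
  ContDiff.sum fun i _ => (hη i).mul (hf.pd i)

end VectorFields

noncomputable def bivector (W : Fin n → Fin n → (Fin n → ℝ) → ℝ)
    (f g : (Fin n → ℝ) → ℝ) : (Fin n → ℝ) → ℝ :=
  fun x => ∑ i, ∑ j, W i j x * pd i f x * pd j g x

noncomputable def hamiltonianField (W : Fin n → Fin n → (Fin n → ℝ) → ℝ)
    (f : (Fin n → ℝ) → ℝ) : Fin n → (Fin n → ℝ) → ℝ :=
  fun j x => ∑ i, W i j x * pd i f x

noncomputable def jacobiBracket (W : Fin n → Fin n → (Fin n → ℝ) → ℝ)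
    (ξ : Fin n → (Fin n → ℝ) → ℝ) (f g : (Fin n → ℝ) → ℝ) : (Fin n → ℝ) → ℝ :=
  fun x => bivector W f g x + f x * vecField ξ g x - g x * vecField ξ f x

section Bivector

variable {W : Fin n → Fin n → (Fin n → ℝ) → ℝ} {f g h : (Fin n → ℝ) → ℝ}

lemma bivector_eq_vecField_hamiltonianField :
    bivector W f g = vecField (hamiltonianField W f) g := by
  funext x
  simp only [bivector, vecField, hamiltonianField, sum_mul]
  exact sum_comm

lemma bivector_apply_left (i : Fin n) : bivector W (fun y => y i) g = vecField (W i) g := by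
  funext x
  simp [bivector, vecField, pd_apply]

lemma bivector_apply_right (j : Fin n) :
    bivector W f (fun y => y j) = vecField (fun i => W i j) f := by
  funext x
  simp [bivector, vecField, pd_apply]

lemma bivector_swap (hW : ∀ i j x, W i j x = -W j i x) (x : Fin n → ℝ) :
    bivector W f g x = -bivector W g f x := by
  simp only [bivector, ← sum_neg_distrib]
  rw [sum_comm]
  exact sum_congr rfl fun i _ => sum_congr rfl fun j _ => by rw [hW]; ring

lemma contDiff_bivector (hW : ∀ i j, ContDiff ℝ ∞ (W i j)) (hf : ContDiff ℝ ∞ f)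
    (hg : ContDiff ℝ ∞ g) : ContDiff ℝ ∞ (bivector W f g) :=
  ContDiff.sum fun i _ => ContDiff.sum fun j _ => ((hW i j).mul (hf.pd i)).mul (hg.pd j)

lemma pd_bivector (hW : ∀ i j, ContDiff ℝ ∞ (W i j)) (hf : ContDiff ℝ ∞ f)
    (hg : ContDiff ℝ ∞ g) (b : Fin n) (x : Fin n → ℝ) :
    pd b (bivector W f g) x = ∑ i, ∑ j,
      (pd b (W i j) x * pd i f x * pd j g x + W i j x * pd b (pd i f) x * pd j g x
        + W i j x * pd i f x * pd b (pd j g) x) := by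
  have hd : ∀ {u : (Fin n → ℝ) → ℝ}, ContDiff ℝ ∞ u → DifferentiableAt ℝ u x :=
    fun hu => hu.differentiable (by simp) x
  unfold bivector
  rw [pd_fun_sum _ fun i _ => hd (ContDiff.sum fun j _ =>
    ((hW i j).mul (hf.pd i)).mul (hg.pd j))]
  refine sum_congr rfl fun i _ => ?_
  rw [pd_fun_sum _ fun j _ => hd (((hW i j).mul (hf.pd i)).mul (hg.pd j))]
  refine sum_congr rfl fun j _ => ?_
  rw [pd_fun_mul (hd ((hW i j).mul (hf.pd i))) (hd (hg.pd j)),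
    pd_fun_mul (hd (hW i j)) (hd (hf.pd i))]
  ring

end Bivector

lemma sum_trilinear_cyclic_eq_zero {s : Fin n → Fin n → Fin n → ℝ}
    (hs : ∀ a i j, s a i j + s i j a + s j a i = 0) (F G H : Fin n → ℝ) :
    ∑ a, ∑ i, ∑ j, F a * G i * H j * s a i j + ∑ a, ∑ i, ∑ j, G a * H i * F j * s a i j
      + ∑ a, ∑ i, ∑ j, H a * F i * G j * s a i j = 0 := by
  rw [sum_comm_cycle (f := fun a i j => G a * H i * F j * s a i j),
    sum_comm_cycle (f := fun a i j => H a * F i * G j * s a i j),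
    sum_comm_cycle (f := fun a i j => H i * F j * G a * s i j a)]
  simp only [← sum_add_distrib]
  refine sum_eq_zero fun a _ => sum_eq_zero fun i _ => sum_eq_zero fun j _ => ?_
  linear_combination F a * G i * H j * hs a i j

lemma sum_hessian_cancel {w K : Fin n → Fin n → ℝ} (hw : ∀ i j, w i j = -w j i)
    (hK : ∀ i j, K i j = K j i) (U V : Fin n → ℝ) :
    ∑ b, ∑ i, (∑ a, w a b * U a) * K b i * (∑ j, w i j * V j)
      + ∑ b, ∑ j, (∑ a, w a b * V a) * K b j * (∑ i, w i j * U i) = 0 := by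
  have flip : ∀ i, ∑ j, w i j * V j = -∑ a, w a i * V a := fun i => by
    rw [← sum_neg_distrib]
    exact sum_congr rfl fun j _ => by rw [hw]; ring
  have swap : ∑ b, ∑ j, (∑ a, w a b * V a) * K b j * (∑ i, w i j * U i)
      = ∑ b, ∑ i, (∑ a, w a b * U a) * K b i * (∑ a, w a i * V a) := by
    rw [sum_comm]
    exact sum_congr rfl fun b _ => sum_congr rfl fun i _ => by rw [hK]; ring
  simp only [swap, flip, mul_neg, sum_neg_distrib, neg_add_cancel]

noncomputable def schoutenTerm (W : Fin n → Fin n → (Fin n → ℝ) → ℝ)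
    (ξ : Fin n → (Fin n → ℝ) → ℝ) (a i j : Fin n) (x : Fin n → ℝ) : ℝ :=
  ∑ b, W a b x * pd b (W i j) x + ξ a x * W i j x

lemma bivector_bivector_add_vecField_mul {W : Fin n → Fin n → (Fin n → ℝ) → ℝ}
    (ξ : Fin n → (Fin n → ℝ) → ℝ) (hW : ∀ i j, ContDiff ℝ ∞ (W i j))
    (f : (Fin n → ℝ) → ℝ) {g h : (Fin n → ℝ) → ℝ} (hg : ContDiff ℝ ∞ g)
    (hh : ContDiff ℝ ∞ h) (x : Fin n → ℝ) :
    bivector W f (bivector W g h) x + vecField ξ f x * bivector W g h x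
      = ∑ a, ∑ i, ∑ j, pd a f x * pd i g x * pd j h x
          * schoutenTerm W ξ a i j x
        + ∑ b, ∑ i, (∑ a, W a b x * pd a f x) * pd b (pd i g) x * ∑ j, W i j x * pd j h x
        + ∑ b, ∑ j, (∑ a, W a b x * pd a f x) * pd b (pd j h) x * ∑ i, W i j x * pd i g x := by
  set X : Fin n → ℝ := fun b => ∑ a, W a b x * pd a f x
  have first_order : ∑ b, X b * ∑ i, ∑ j, pd b (W i j) x * pd i g x * pd j h x
      = ∑ a, ∑ i, ∑ j, pd a f x * pd i g x * pd j h x * ∑ b, W a b x * pd b (W i j) x := by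
    simp only [X, sum_mul]
    rw [sum_comm]
    refine sum_congr rfl fun a _ => ?_
    simp only [mul_sum]
    rw [← sum_comm_cycle]
    exact sum_congr rfl fun i _ => sum_congr rfl fun j _ => sum_congr rfl fun b _ => by ring
  have hess_g : ∑ b, X b * ∑ i, ∑ j, W i j x * pd b (pd i g) x * pd j h x
      = ∑ b, ∑ i, X b * pd b (pd i g) x * ∑ j, W i j x * pd j h x := by
    simp only [mul_sum]
    exact sum_congr rfl fun b _ => sum_congr rfl fun i _ => sum_congr rfl fun j _ => by ring
  have hess_h : ∑ b, X b * ∑ i, ∑ j, W i j x * pd i g x * pd b (pd j h) x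
      = ∑ b, ∑ j, X b * pd b (pd j h) x * ∑ i, W i j x * pd i g x := by
    simp only [mul_sum]
    exact sum_congr rfl fun b _ => by
      rw [sum_comm]
      exact sum_congr rfl fun j _ => sum_congr rfl fun i _ => by ring
  have euler : vecField ξ f x * bivector W g h x
      = ∑ a, ∑ i, ∑ j, pd a f x * pd i g x * pd j h x * (ξ a x * W i j x) := by
    simp only [vecField, bivector]
    rw [sum_mul]
    simp only [mul_sum]
    exact sum_congr rfl fun a _ => sum_congr rfl fun i _ => sum_congr rfl fun j _ => by ring
  rw [bivector_eq_vecField_hamiltonianField, vecField, euler]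
  simp only [schoutenTerm, hamiltonianField, pd_bivector hW hg hh, mul_add, sum_add_distrib]
  linear_combination first_order + hess_g + hess_h

lemma bivector_cyclic_add_vecField_mul_eq_zero {W : Fin n → Fin n → (Fin n → ℝ) → ℝ}
    {ξ : Fin n → (Fin n → ℝ) → ℝ} (hW : ∀ i j, ContDiff ℝ ∞ (W i j))
    (hanti : ∀ i j x, W i j x = -W j i x)
    (hS : ∀ x a i j, schoutenTerm W ξ a i j x + schoutenTerm W ξ i j a x
      + schoutenTerm W ξ j a i x = 0)
    {f g h : (Fin n → ℝ) → ℝ} (hf : ContDiff ℝ ∞ f) (hg : ContDiff ℝ ∞ g)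
    (hh : ContDiff ℝ ∞ h) (x : Fin n → ℝ) :
    bivector W f (bivector W g h) x + vecField ξ f x * bivector W g h x
      + (bivector W g (bivector W h f) x + vecField ξ g x * bivector W h f x)
      + (bivector W h (bivector W f g) x + vecField ξ h x * bivector W f g x) = 0 := by
  have hw : ∀ i j, W i j x = -W j i x := fun i j => hanti i j x
  rw [bivector_bivector_add_vecField_mul ξ hW f hg hh,
    bivector_bivector_add_vecField_mul ξ hW g hh hf, bivector_bivector_add_vecField_mul ξ hW h hf hg]
  have first_order := sum_trilinear_cyclic_eq_zero (hS x) (fun a => pd a f x)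
    (fun a => pd a g x) (fun a => pd a h x)
  have hess_f := sum_hessian_cancel hw (fun a b => pd_comm hf a b x) (fun a => pd a h x)
    (fun a => pd a g x)
  have hess_g := sum_hessian_cancel hw (fun a b => pd_comm hg a b x) (fun a => pd a f x)
    (fun a => pd a h x)
  have hess_h := sum_hessian_cancel hw (fun a b => pd_comm hh a b x) (fun a => pd a g x)
    (fun a => pd a f x)
  linear_combination first_order + hess_f + hess_g + hess_h

section JacobiBracket

variable {W : Fin n → Fin n → (Fin n → ℝ) → ℝ} {ξ : Fin n → (Fin n → ℝ) → ℝ}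
  {u v w : (Fin n → ℝ) → ℝ}

lemma vecField_jacobiBracket (η : Fin n → (Fin n → ℝ) → ℝ) (hW : ∀ i j, ContDiff ℝ ∞ (W i j))
    (hξ : ∀ i, ContDiff ℝ ∞ (ξ i)) (hv : ContDiff ℝ ∞ v) (hw : ContDiff ℝ ∞ w)
    (x : Fin n → ℝ) :
    vecField η (jacobiBracket W ξ v w) x = vecField η (bivector W v w) x
      + (vecField η v x * vecField ξ w x + v x * vecField η (vecField ξ w) x)
      - (vecField η w x * vecField ξ v x + w x * vecField η (vecField ξ v) x) := by
  have hd : ∀ {u : (Fin n → ℝ) → ℝ}, ContDiff ℝ ∞ u → DifferentiableAt ℝ u x :=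
    fun hu => hu.differentiable (by simp) x
  have hEv := hd (contDiff_vecField hξ hv)
  have hEw := hd (contDiff_vecField hξ hw)
  unfold jacobiBracket
  rw [vecField_fun_sub _ ((hd (contDiff_bivector hW hv hw)).fun_add ((hd hv).fun_mul hEw))
      ((hd hw).fun_mul hEv),
    vecField_fun_add _ (hd (contDiff_bivector hW hv hw)) ((hd hv).fun_mul hEw),
    vecField_fun_mul _ (hd hv) hEw, vecField_fun_mul _ (hd hw) hEv]

lemma bivector_jacobiBracket (hW : ∀ i j, ContDiff ℝ ∞ (W i j))
    (hξ : ∀ i, ContDiff ℝ ∞ (ξ i)) (hv : ContDiff ℝ ∞ v) (hw : ContDiff ℝ ∞ w)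
    (x : Fin n → ℝ) :
    bivector W u (jacobiBracket W ξ v w) x = bivector W u (bivector W v w) x
      + (bivector W u v x * vecField ξ w x + v x * bivector W u (vecField ξ w) x)
      - (bivector W u w x * vecField ξ v x + w x * bivector W u (vecField ξ v) x) := by
  simp only [bivector_eq_vecField_hamiltonianField (f := u)]
  exact vecField_jacobiBracket _ hW hξ hv hw x

theorem jacobiBracket_jacobi (hW : ∀ i j, ContDiff ℝ ∞ (W i j))
    (hanti : ∀ i j x, W i j x = -W j i x) (hξ : ∀ i, ContDiff ℝ ∞ (ξ i))
    (hS : ∀ x a i j, schoutenTerm W ξ a i j x + schoutenTerm W ξ i j a x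
      + schoutenTerm W ξ j a i x = 0)
    (hE : ∀ f g, ContDiff ℝ ∞ f → ContDiff ℝ ∞ g → ∀ x, vecField ξ (bivector W f g) x
      = bivector W (vecField ξ f) g x + bivector W f (vecField ξ g) x)
    {f g h : (Fin n → ℝ) → ℝ} (hf : ContDiff ℝ ∞ f) (hg : ContDiff ℝ ∞ g)
    (hh : ContDiff ℝ ∞ h) (x : Fin n → ℝ) :
    jacobiBracket W ξ f (jacobiBracket W ξ g h) x + jacobiBracket W ξ g (jacobiBracket W ξ h f) x
      + jacobiBracket W ξ h (jacobiBracket W ξ f g) x = 0 := by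
  have swap : ∀ u v, bivector W u v x = -bivector W v u x := fun _ _ => bivector_swap hanti x
  have unfold_outer : ∀ u v w, jacobiBracket W ξ u (jacobiBracket W ξ v w) x
      = bivector W u (jacobiBracket W ξ v w) x + u x * vecField ξ (jacobiBracket W ξ v w) x
        - jacobiBracket W ξ v w x * vecField ξ u x := fun _ _ _ => rfl
  rw [unfold_outer, unfold_outer, unfold_outer,
    bivector_jacobiBracket hW hξ hg hh, bivector_jacobiBracket hW hξ hh hf,
    bivector_jacobiBracket hW hξ hf hg, vecField_jacobiBracket ξ hW hξ hg hh,
    vecField_jacobiBracket ξ hW hξ hh hf, vecField_jacobiBracket ξ hW hξ hf hg]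
  simp only [jacobiBracket]
  linear_combination bivector_cyclic_add_vecField_mul_eq_zero hW hanti hS hf hg hh x
    + f x * hE g h hg hh x + g x * hE h f hh hf x + h x * hE f g hf hg x
    + f x * swap (vecField ξ g) h + g x * swap (vecField ξ h) f + h x * swap (vecField ξ f) g
    - vecField ξ h x * swap g f - vecField ξ f x * swap h g - vecField ξ g x * swap f h

end JacobiBracket

lemma vecField_coeff_eq_of_vecField_bivector {W : Fin n → Fin n → (Fin n → ℝ) → ℝ}
    {ξ : Fin n → (Fin n → ℝ) → ℝ}
    (hE : ∀ f g, ContDiff ℝ ∞ f → ContDiff ℝ ∞ g → ∀ x, vecField ξ (bivector W f g) x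
      = bivector W (vecField ξ f) g x + bivector W f (vecField ξ g) x)
    (i j : Fin n) (x : Fin n → ℝ) :
    vecField ξ (W i j) x = vecField (fun a => W a j) (ξ i) x + vecField (W i) (ξ j) x := by
  have h := hE _ _ (contDiff_apply ℝ ℝ i) (contDiff_apply ℝ ℝ j) x
  rwa [bivector_apply_left, vecField_apply, vecField_apply, vecField_apply,
    bivector_apply_right, bivector_apply_left] at h

noncomputable def linearJacobiCoeff (c : Fin n → Fin n → Fin n → ℝ)
    (ξ : Fin n → (Fin n → ℝ) → ℝ) (i j : Fin n) (x : Fin n → ℝ) : ℝ :=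
  ∑ k, x k * c k i j + ξ i x * x j - x i * ξ j x

section LinearJacobi

variable {c : Fin n → Fin n → Fin n → ℝ} {ξ : Fin n → (Fin n → ℝ) → ℝ}

lemma jacLambda_eq_bivector : jacLambda c ξ = bivector (linearJacobiCoeff c ξ) := by
  funext f g x
  have lie_poisson : liePoisson c f g x
      = ∑ i, ∑ j, (∑ k, x k * c k i j) * pd i f x * pd j g x := by
    simp only [liePoisson, sum_mul]
    exact (sum_comm_cycle).symm
  have vecField_mul_euler : vecField ξ f x * eulerField g x
      = ∑ i, ∑ j, ξ i x * x j * pd i f x * pd j g x := by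
    rw [vecField, eulerField, sum_mul_sum]
    exact sum_congr rfl fun i _ => sum_congr rfl fun j _ => by ring
  have euler_mul_vecField : eulerField f x * vecField ξ g x
      = ∑ i, ∑ j, x i * ξ j x * pd i f x * pd j g x := by
    rw [vecField, eulerField, sum_mul_sum]
    exact sum_congr rfl fun i _ => sum_congr rfl fun j _ => by ring
  rw [jacLambda, lie_poisson, vecField_mul_euler, euler_mul_vecField, bivector]
  simp only [← sum_add_distrib, ← sum_sub_distrib]
  exact sum_congr rfl fun i _ => sum_congr rfl fun j _ => by rw [linearJacobiCoeff]; ring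

lemma jacBr_eq_jacobiBracket : jacBr c ξ = jacobiBracket (linearJacobiCoeff c ξ) ξ := by
  funext f g x
  simp only [jacBr, jacobiBracket, jacLambda_eq_bivector]

lemma linearJacobiCoeff_antisymm (hanti : ∀ k i j, c k i j = -c k j i) (i j : Fin n)
    (x : Fin n → ℝ) : linearJacobiCoeff c ξ i j x = -linearJacobiCoeff c ξ j i x := by
  simp only [linearJacobiCoeff, hanti _ i j, mul_neg, sum_neg_distrib]
  ring

lemma contDiff_linearJacobiCoeff (hξ : ∀ i, ContDiff ℝ ∞ (ξ i)) (i j : Fin n) :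
    ContDiff ℝ ∞ (linearJacobiCoeff c ξ i j) :=
  ((ContDiff.sum fun k _ => (contDiff_apply ℝ ℝ k).mul contDiff_const).add
    ((hξ i).mul (contDiff_apply ℝ ℝ j))).sub ((contDiff_apply ℝ ℝ i).mul (hξ j))

lemma pd_linearJacobiCoeff (hξ : ∀ i, ContDiff ℝ ∞ (ξ i)) (b i j : Fin n) (x : Fin n → ℝ) :
    pd b (linearJacobiCoeff c ξ i j) x = c b i j + pd b (ξ i) x * x j
      + (if j = b then ξ i x else 0) - (if i = b then ξ j x else 0) - x i * pd b (ξ j) x := by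
  have hd : ∀ {u : (Fin n → ℝ) → ℝ}, ContDiff ℝ ∞ u → DifferentiableAt ℝ u x :=
    fun hu => hu.differentiable (by simp) x
  have hcoord : ∀ k, DifferentiableAt ℝ (fun y : Fin n → ℝ => y k) x :=
    fun k => hd (contDiff_apply ℝ ℝ k)
  have hlin : ∀ k ∈ univ, DifferentiableAt ℝ (fun y : Fin n → ℝ => y k * c k i j) x :=
    fun k _ => (hcoord k).fun_mul (differentiableAt_const _)
  unfold linearJacobiCoeff
  rw [pd_fun_sub ((DifferentiableAt.fun_sum hlin).fun_add ((hd (hξ i)).fun_mul (hcoord j)))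
      ((hcoord i).fun_mul (hd (hξ j))),
    pd_fun_add (DifferentiableAt.fun_sum hlin) ((hd (hξ i)).fun_mul (hcoord j)),
    pd_fun_sum _ hlin, pd_fun_mul (hd (hξ i)) (hcoord j), pd_fun_mul (hcoord i) (hd (hξ j))]
  simp only [pd_fun_mul (hcoord _) (differentiableAt_const _), pd_apply, pd_const, ite_mul,
    one_mul, zero_mul, mul_zero, add_zero, sum_ite_eq', mem_univ, if_true, mul_ite, mul_one]
  ring

lemma sum_mul_pd_linearJacobiCoeff (hξ : ∀ i, ContDiff ℝ ∞ (ξ i)) (V : Fin n → ℝ)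
    (i j : Fin n) (x : Fin n → ℝ) :
    ∑ b, V b * pd b (linearJacobiCoeff c ξ i j) x = ∑ b, V b * c b i j
      + (∑ b, V b * pd b (ξ i) x) * x j + ξ i x * V j - V i * ξ j x
      - x i * ∑ b, V b * pd b (ξ j) x := by
  simp only [pd_linearJacobiCoeff hξ, mul_ite, mul_zero, mul_sub, mul_add, sum_sub_distrib,
    sum_add_distrib, sum_ite_eq, mem_univ, if_true, sum_mul, mul_assoc, mul_sum, mul_left_comm]
  ring

lemma sum_structureConst_cyclic (hanti : ∀ k i j, c k i j = -c k j i)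
    (hjac : ∀ i j k m : Fin n,
      ∑ ν : Fin n, (c ν i j * c m ν k + c ν j k * c m ν i + c ν k i * c m ν j) = 0)
    (x : Fin n → ℝ) (a i j : Fin n) :
    ∑ b, (∑ k, x k * c k a b) * c b i j + ∑ b, (∑ k, x k * c k i b) * c b j a
      + ∑ b, (∑ k, x k * c k j b) * c b a i = 0 := by
  have contract : ∀ p q r, ∑ b, (∑ k, x k * c k p b) * c b q r
      = ∑ k, x k * ∑ b, c k p b * c b q r := fun p q r => by
    simp only [sum_mul, mul_sum]
    rw [sum_comm]
    exact sum_congr rfl fun k _ => sum_congr rfl fun b _ => by ring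
  have jacobi : ∀ k, ∑ b, c k a b * c b i j + ∑ b, c k i b * c b j a
      + ∑ b, c k j b * c b a i = 0 := fun k => by
    have flip : ∀ p q r, ∑ b, c k p b * c b q r = -∑ b, c b q r * c k b p := fun p q r => by
      rw [← sum_neg_distrib]
      exact sum_congr rfl fun b _ => by rw [hanti k p b]; ring
    have h := hjac i j a k
    rw [sum_add_distrib, sum_add_distrib] at h
    linear_combination (flip a i j) + (flip i j a) + (flip j a i) - h
  rw [contract, contract, contract, ← sum_add_distrib, ← sum_add_distrib]
  exact sum_eq_zero fun k _ => by rw [← mul_add, ← mul_add, jacobi k, mul_zero]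

lemma sum_mul_structureConst_of_vecField_bivector (hanti : ∀ k i j, c k i j = -c k j i)
    (hξ : ∀ i, ContDiff ℝ ∞ (ξ i))
    (hE : ∀ f g, ContDiff ℝ ∞ f → ContDiff ℝ ∞ g → ∀ x,
      vecField ξ (bivector (linearJacobiCoeff c ξ) f g) x
        = bivector (linearJacobiCoeff c ξ) (vecField ξ f) g x
          + bivector (linearJacobiCoeff c ξ) f (vecField ξ g) x)
    (x : Fin n → ℝ) (q r : Fin n) :
    ∑ b, ξ b x * c b q r = ∑ b, linearJacobiCoeff c ξ q b x * pd b (ξ r) x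
      - ∑ b, linearJacobiCoeff c ξ r b x * pd b (ξ q) x - (∑ b, ξ b x * pd b (ξ q) x) * x r
      + x q * ∑ b, ξ b x * pd b (ξ r) x := by
  have h := vecField_coeff_eq_of_vecField_bivector hE q r x
  have flip : ∑ b, linearJacobiCoeff c ξ b r x * pd b (ξ q) x
      = -∑ b, linearJacobiCoeff c ξ r b x * pd b (ξ q) x := by
    rw [← sum_neg_distrib]
    exact sum_congr rfl fun b _ => by rw [linearJacobiCoeff_antisymm hanti b r x]; ring
  simp only [vecField, flip] at h
  rw [sum_mul_pd_linearJacobiCoeff hξ (fun b => ξ b x)] at h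
  linear_combination h

lemma schoutenTerm_linearJacobiCoeff_cyclic (hanti : ∀ k i j, c k i j = -c k j i)
    (hjac : ∀ i j k m : Fin n,
      ∑ ν : Fin n, (c ν i j * c m ν k + c ν j k * c m ν i + c ν k i * c m ν j) = 0)
    (hξ : ∀ i, ContDiff ℝ ∞ (ξ i))
    (hE : ∀ f g, ContDiff ℝ ∞ f → ContDiff ℝ ∞ g → ∀ x,
      vecField ξ (bivector (linearJacobiCoeff c ξ) f g) x
        = bivector (linearJacobiCoeff c ξ) (vecField ξ f) g x
          + bivector (linearJacobiCoeff c ξ) f (vecField ξ g) x)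
    (x : Fin n → ℝ) (a i j : Fin n) :
    schoutenTerm (linearJacobiCoeff c ξ) ξ a i j x + schoutenTerm (linearJacobiCoeff c ξ) ξ i j a x
      + schoutenTerm (linearJacobiCoeff c ξ) ξ j a i x = 0 := by
  set W := linearJacobiCoeff c ξ
  have hW : ∀ p q, W p q x = ∑ k, x k * c k p q + ξ p x * x q - x p * ξ q x := fun _ _ => rfl
  have hL : ∀ p q, ∑ k, x k * c k p q = -∑ k, x k * c k q p := fun p q => by
    rw [← sum_neg_distrib]
    exact sum_congr rfl fun k _ => by rw [hanti k p q]; ring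
  have expand : ∀ p q r, schoutenTerm W ξ p q r x = ∑ b, W p b x * c b q r
      + (∑ b, W p b x * pd b (ξ q) x) * x r + ξ q x * W p r x - W p q x * ξ r x
      - x q * (∑ b, W p b x * pd b (ξ r) x) + ξ p x * W q r x := fun p q r => by
    rw [schoutenTerm, sum_mul_pd_linearJacobiCoeff hξ (fun b => W p b x)]
  have split : ∀ p q r, ∑ b, W p b x * c b q r = ∑ b, (∑ k, x k * c k p b) * c b q r
      + ξ p x * ∑ b, x b * c b q r - x p * ∑ b, ξ b x * c b q r := fun p q r => by
    simp only [hW, sub_mul, add_mul, sum_sub_distrib, sum_add_distrib, mul_sum, mul_assoc]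
  have coord := sum_mul_structureConst_of_vecField_bivector hanti hξ hE x
  rw [expand, expand, expand, split, split, split, coord, coord, coord]
  linear_combination sum_structureConst_cyclic hanti hjac x a i j + ξ i x * hW a j
    + ξ j x * hW i a + ξ a x * hW j i + ξ a x * hL i j + ξ i x * hL j a + ξ j x * hL a i

end LinearJacobi

end

/-- Let `Ω` be the Lie–Poisson bivector of a real Lie algebra, `A` the Euler
vector field and `E = ∑ ξ^i ∂_i` a vector field with smooth coefficients; put
`Λ := Ω + E∧A`.  If `[E,Λ] = 0` on smooth functions, then the bracket
`{f,g} := Λ(f,g) + f·E(g) - g·E(f)` satisfies the Jacobi identity on smooth functions,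
i.e. `(Ω + E∧A, E)` is a Jacobi structure on `ℝ^n`. -/
theorem linear_jacobi_structure_from_commuting_vector_field (n : ℕ)
    (c : Fin n → Fin n → Fin n → ℝ)
    (hanti : ∀ k i j, c k i j = -c k j i)
    (hjac : ∀ i j k m : Fin n,
      ∑ ν : Fin n, (c ν i j * c m ν k + c ν j k * c m ν i + c ν k i * c m ν j) = 0)
    (ξ : Fin n → (Fin n → ℝ) → ℝ) (hξ : ∀ i, ContDiff ℝ ∞ (ξ i))
    (hEΛ : ∀ f g : (Fin n → ℝ) → ℝ, ContDiff ℝ ∞ f → ContDiff ℝ ∞ g →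
      (fun x => vecField ξ (jacLambda c ξ f g) x - jacLambda c ξ (vecField ξ f) g x -
        jacLambda c ξ f (vecField ξ g) x) = 0) :
    ∀ f g h : (Fin n → ℝ) → ℝ, ContDiff ℝ ∞ f → ContDiff ℝ ∞ g → ContDiff ℝ ∞ h →
      (fun x => jacBr c ξ f (jacBr c ξ g h) x + jacBr c ξ g (jacBr c ξ h f) x +
        jacBr c ξ h (jacBr c ξ f g) x) = 0 := by
  intro f g h hf hg hh
  have hE : ∀ f g, ContDiff ℝ ∞ f → ContDiff ℝ ∞ g → ∀ x,
      vecField ξ (bivector (linearJacobiCoeff c ξ) f g) x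
        = bivector (linearJacobiCoeff c ξ) (vecField ξ f) g x
          + bivector (linearJacobiCoeff c ξ) f (vecField ξ g) x := fun f g hf hg x => by
    have hx := congrFun (hEΛ f g hf hg) x
    simp only [jacLambda_eq_bivector, Pi.zero_apply] at hx
    linarith
  funext x
  rw [jacBr_eq_jacobiBracket]
  exact jacobiBracket_jacobi (contDiff_linearJacobiCoeff hξ) (linearJacobiCoeff_antisymm hanti) hξ
    (schoutenTerm_linearJacobiCoeff_cyclic hanti hjac hξ hE) hE hf hg hh x
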